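/- Let K₀ : [0,a] → ℝ be in L²(0,a) and define F(k) = ∫₀^a K₀(t) sin(kt) dt for complex k. Then F(k) = o(e^{a|Im k|}) as |k| → ∞ in ℂ; i.e., for every ε > 0 there is R such that |F(k)| ≤ ε e^{a|Im k|} whenever |k| ≥ R. -/

import Mathlib

/-!
This is the Riemann–Lebesgue argument with the exponential weight built in. For `0 ≤ t ≤ a`
both `‖sin (k t)‖` and `‖cos (k t)‖` are at most `exp (a |Im k|)`, so `f ↦ ∫₀^a f(t) sin (k t) dt`
is bounded by `‖f‖₁ · exp (a |Im k|)`. For a `C¹` function, integrating by parts against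
`-cos (k t)`, whose derivative is `k sin (k t)`, gains a factor `1 / ‖k‖`. Approximating `K₀` in
`L¹(0, a)` by a polynomial (first by a continuous function, then by Weierstrass) concludes.
-/

open MeasureTheory

open Set Polynomial

lemma Complex.norm_exp_mul_I_le (z : ℂ) : ‖Complex.exp (z * I)‖ ≤ Real.exp |z.im| := by
  rw [Complex.norm_exp]
  exact Real.exp_le_exp.2 (by simpa using neg_le_abs z.im)

lemma Complex.norm_sin_le_exp_abs_im (z : ℂ) : ‖Complex.sin z‖ ≤ Real.exp |z.im| := by
  have h₁ := norm_exp_mul_I_le (-z)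
  have h₂ := norm_exp_mul_I_le z
  have := norm_sub_le (exp (-z * I)) (exp (z * I))
  rw [Complex.sin, norm_div, norm_mul, norm_I, mul_one, Complex.norm_two]
  simp only [Complex.neg_im, abs_neg] at h₁
  linarith

lemma Complex.norm_cos_le_exp_abs_im (z : ℂ) : ‖Complex.cos z‖ ≤ Real.exp |z.im| := by
  have h₁ := norm_exp_mul_I_le (-z)
  have h₂ := norm_exp_mul_I_le z
  have := norm_add_le (exp (z * I)) (exp (-z * I))
  rw [Complex.cos, norm_div, Complex.norm_two]
  simp only [Complex.neg_im, abs_neg] at h₁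
  linarith

lemma Complex.abs_im_mul_ofReal_le {a t : ℝ} (k : ℂ) (ht : |t| ≤ a) :
    |(k * t).im| ≤ a * |k.im| := by
  rw [Complex.mul_im, ofReal_re, ofReal_im, mul_zero, zero_add, abs_mul, mul_comm]
  exact mul_le_mul_of_nonneg_right ht (abs_nonneg _)

lemma intervalIntegral.norm_integral_ofReal_mul_le {a b M : ℝ} (hab : a ≤ b) {f : ℝ → ℝ}
    {φ : ℝ → ℂ} (hf : IntervalIntegrable f volume a b) (hφ : ∀ t ∈ Ioc a b, ‖φ t‖ ≤ M) :
    ‖∫ t in a..b, (f t : ℂ) * φ t‖ ≤ (∫ t in a..b, |f t|) * M := by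
  rw [← intervalIntegral.integral_mul_const]
  refine norm_integral_le_of_norm_le hab (ae_of_all _ fun t ht => ?_) (hf.abs.mul_const M)
  rw [norm_mul, Complex.norm_real, Real.norm_eq_abs]
  exact mul_le_mul_of_nonneg_left (hφ t ht) (abs_nonneg _)

lemma norm_integral_ofReal_mul_sin_le {a : ℝ} (ha : 0 ≤ a) {f : ℝ → ℝ}
    (hf : IntervalIntegrable f volume 0 a) (k : ℂ) :
    ‖∫ t in 0..a, (f t : ℂ) * Complex.sin (k * t)‖ ≤
      (∫ t in 0..a, |f t|) * Real.exp (a * |k.im|) :=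
  intervalIntegral.norm_integral_ofReal_mul_le ha hf fun t ht =>
    (Complex.norm_sin_le_exp_abs_im _).trans <| Real.exp_le_exp.2 <|
      Complex.abs_im_mul_ofReal_le k (by rw [abs_of_pos ht.1]; exact ht.2)

lemma IntervalIntegrable.ofReal {f : ℝ → ℝ} {a b : ℝ} {μ : Measure ℝ}
    (hf : IntervalIntegrable f μ a b) : IntervalIntegrable (fun t => (f t : ℂ)) μ a b :=
  ⟨hf.1.ofReal, hf.2.ofReal⟩

lemma norm_mul_norm_integral_ofReal_mul_sin_le {a : ℝ} (ha : 0 ≤ a) {f f' : ℝ → ℝ}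
    (hf : ∀ x ∈ uIcc 0 a, HasDerivAt f (f' x) x) (hf' : IntervalIntegrable f' volume 0 a)
    (k : ℂ) :
    ‖k‖ * ‖∫ t in 0..a, (f t : ℂ) * Complex.sin (k * t)‖ ≤
      (|f a| + |f 0| + ∫ t in 0..a, |f' t|) * Real.exp (a * |k.im|) := by
  set E := Real.exp (a * |k.im|)
  have hv : ∀ x ∈ uIcc 0 a,
      HasDerivAt (fun t : ℝ => -Complex.cos (k * t)) (k * Complex.sin (k * x)) x := by
    intro x _
    simpa [mul_comm] using (((hasDerivAt_id (x : ℂ)).const_mul k).ccos.neg).comp_ofReal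
  have hibp := intervalIntegral.integral_mul_deriv_eq_deriv_mul
    (fun x hx => (hf x hx).ofReal_comp) hv hf'.ofReal
    ((by fun_prop : Continuous fun t : ℝ => k * Complex.sin (k * t)).intervalIntegrable _ _)
  have hcos : ∀ t, |t| ≤ a → ‖-Complex.cos (k * t)‖ ≤ E := fun t ht => by
    rw [norm_neg]
    exact (Complex.norm_cos_le_exp_abs_im _).trans
      (Real.exp_le_exp.2 (Complex.abs_im_mul_ofReal_le k ht))
  have hend : ∀ t, |t| ≤ a → ‖(f t : ℂ) * -Complex.cos (k * t)‖ ≤ |f t| * E := fun t ht => by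
    rw [norm_mul, Complex.norm_real, Real.norm_eq_abs]
    exact mul_le_mul_of_nonneg_left (hcos t ht) (abs_nonneg _)
  have hbulk := intervalIntegral.norm_integral_ofReal_mul_le ha hf' fun t ht =>
    hcos t (by rw [abs_of_pos ht.1]; exact ht.2)
  calc ‖k‖ * ‖∫ t in 0..a, (f t : ℂ) * Complex.sin (k * t)‖
      = ‖∫ t in 0..a, (f t : ℂ) * (k * Complex.sin (k * t))‖ := by
        rw [← norm_mul, ← intervalIntegral.integral_const_mul]
        simp only [mul_left_comm]
    _ ≤ _ := by
        rw [hibp]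
        have h_a := hend a (abs_of_nonneg ha).le
        have h_0 := hend 0 (by simpa using ha)
        have := norm_sub_le_of_le (norm_sub_le_of_le h_a h_0) hbulk
        linarith

lemma exists_norm_integral_ofReal_mul_sin_le_of_hasDerivAt {a : ℝ} (ha : 0 ≤ a) {f f' : ℝ → ℝ}
    (hf : ∀ x ∈ uIcc 0 a, HasDerivAt f (f' x) x) (hf' : IntervalIntegrable f' volume 0 a)
    {ε : ℝ} (hε : 0 < ε) :
    ∃ R : ℝ, ∀ k : ℂ, R ≤ ‖k‖ →
      ‖∫ t in 0..a, (f t : ℂ) * Complex.sin (k * t)‖ ≤ ε * Real.exp (a * |k.im|) := by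
  set C := |f a| + |f 0| + ∫ t in 0..a, |f' t|
  have hC : 0 ≤ C := by
    have : 0 ≤ ∫ t in 0..a, |f' t| := intervalIntegral.integral_nonneg ha fun t _ => abs_nonneg _
    positivity
  refine ⟨C / ε + 1, fun k hk => ?_⟩
  have hk : C ≤ ‖k‖ * ε := (div_le_iff₀ hε).1 (by linarith)
  have hk₀ : 0 < ‖k‖ := by linarith [div_nonneg hC hε.le]
  refine le_of_mul_le_mul_left ?_ hk₀
  calc ‖k‖ * ‖∫ t in 0..a, (f t : ℂ) * Complex.sin (k * t)‖
      ≤ C * Real.exp (a * |k.im|) := norm_mul_norm_integral_ofReal_mul_sin_le ha hf hf' k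
    _ ≤ ‖k‖ * ε * Real.exp (a * |k.im|) := by gcongr
    _ = ‖k‖ * (ε * Real.exp (a * |k.im|)) := mul_assoc _ _ _

lemma IntervalIntegrable.exists_continuous_integral_abs_sub_le {a b : ℝ} (hab : a ≤ b)
    {f : ℝ → ℝ} (hf : IntervalIntegrable f volume a b) {ε : ℝ} (hε : 0 < ε) :
    ∃ g : ℝ → ℝ, Continuous g ∧ ∫ t in a..b, |f t - g t| ≤ ε := by
  have hfi := (integrable_indicator_iff measurableSet_Ioc).2 hf.1
  obtain ⟨g, -, hfg, hg, hgi⟩ := hfi.exists_hasCompactSupport_integral_sub_le hε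
  refine ⟨g, hg, ?_⟩
  rw [intervalIntegral.integral_of_le hab]
  calc ∫ t in Ioc a b, |f t - g t|
      = ∫ t in Ioc a b, ‖(Ioc a b).indicator f t - g t‖ :=
        setIntegral_congr_fun measurableSet_Ioc fun t ht => by
          rw [indicator_of_mem ht, Real.norm_eq_abs]
    _ ≤ ∫ t, ‖(Ioc a b).indicator f t - g t‖ :=
        setIntegral_le_integral (hfi.sub hgi).norm (ae_of_all _ fun _ => norm_nonneg _)
    _ ≤ ε := hfg

lemma ContinuousOn.exists_polynomial_integral_abs_sub_le {a b : ℝ} (hab : a ≤ b)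
    {g : ℝ → ℝ} (hg : ContinuousOn g (Icc a b)) {ε : ℝ} (hε : 0 < ε) :
    ∃ p : ℝ[X], ∫ t in a..b, |g t - p.eval t| ≤ ε := by
  have hδ : 0 < ε / (b - a + 1) := div_pos hε (by linarith)
  obtain ⟨p, hp⟩ := exists_polynomial_near_of_continuousOn a b g hg _ hδ
  refine ⟨p, (Real.le_norm_self _).trans ?_⟩
  calc ‖∫ t in a..b, |g t - p.eval t|‖ ≤ ε / (b - a + 1) * |b - a| :=
        intervalIntegral.norm_integral_le_of_norm_le_const fun t ht => by
          rw [uIoc_of_le hab] at ht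
          rw [Real.norm_eq_abs, abs_abs, abs_sub_comm]
          exact (hp t (Ioc_subset_Icc_self ht)).le
    _ ≤ ε := by
        rw [abs_of_nonneg (sub_nonneg.2 hab), div_mul_eq_mul_div, div_le_iff₀ (by linarith)]
        nlinarith

lemma IntervalIntegrable.exists_polynomial_integral_abs_sub_le {a b : ℝ} (hab : a ≤ b)
    {f : ℝ → ℝ} (hf : IntervalIntegrable f volume a b) {ε : ℝ} (hε : 0 < ε) :
    ∃ p : ℝ[X], ∫ t in a..b, |f t - p.eval t| ≤ ε := by
  obtain ⟨g, hg, hfg⟩ := hf.exists_continuous_integral_abs_sub_le hab (half_pos hε)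
  obtain ⟨p, hgp⟩ := hg.continuousOn.exists_polynomial_integral_abs_sub_le hab (half_pos hε)
  refine ⟨p, ?_⟩
  have hfg_i := (hf.sub (hg.intervalIntegrable a b)).abs
  have hgp_i : IntervalIntegrable (fun t => |g t - p.eval t|) volume a b :=
    (hg.sub p.continuous).abs.intervalIntegrable a b
  calc ∫ t in a..b, |f t - p.eval t|
      ≤ ∫ t in a..b, (|f t - g t| + |g t - p.eval t|) :=
        intervalIntegral.integral_mono_on hab (hf.sub (p.continuous.intervalIntegrable a b)).abs
          (hfg_i.add hgp_i) fun t _ => abs_sub_le _ _ _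
    _ ≤ ε := by
        rw [intervalIntegral.integral_add hfg_i hgp_i]
        linarith

theorem IntervalIntegrable.exists_norm_integral_ofReal_mul_sin_le {a : ℝ} (ha : 0 ≤ a)
    {f : ℝ → ℝ} (hf : IntervalIntegrable f volume 0 a) {ε : ℝ} (hε : 0 < ε) :
    ∃ R : ℝ, ∀ k : ℂ, R ≤ ‖k‖ →
      ‖∫ t in 0..a, (f t : ℂ) * Complex.sin (k * t)‖ ≤ ε * Real.exp (a * |k.im|) := by
  obtain ⟨p, hfp⟩ := hf.exists_polynomial_integral_abs_sub_le ha (half_pos hε)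
  have hp := p.continuous.intervalIntegrable (μ := volume) 0 a
  obtain ⟨R, hR⟩ := exists_norm_integral_ofReal_mul_sin_le_of_hasDerivAt ha
    (fun x _ => p.hasDerivAt x) (p.derivative.continuous.intervalIntegrable 0 a) (half_pos hε)
  refine ⟨R, fun k hk => ?_⟩
  have hsin : ContinuousOn (fun t : ℝ => Complex.sin (k * t)) (uIcc 0 a) := by fun_prop
  have hsplit : ∫ t in 0..a, (f t : ℂ) * Complex.sin (k * t) =
      (∫ t in 0..a, ((f t - p.eval t : ℝ) : ℂ) * Complex.sin (k * t)) +
        ∫ t in 0..a, ((p.eval t : ℝ) : ℂ) * Complex.sin (k * t) := by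
    rw [← intervalIntegral.integral_add ((hf.sub hp).ofReal.mul_continuousOn hsin)
      (hp.ofReal.mul_continuousOn hsin)]
    simp only [Complex.ofReal_sub, sub_mul, sub_add_cancel]
  have happrox := norm_integral_ofReal_mul_sin_le ha (hf.sub hp) k
  rw [hsplit]
  calc _ ≤ _ := norm_add_le _ _
    _ ≤ ε / 2 * Real.exp (a * |k.im|) + ε / 2 * Real.exp (a * |k.im|) := by
        gcongr
        · exact happrox.trans (by gcongr)
        · exact hR k hk
    _ = ε * Real.exp (a * |k.im|) := by ring

/-- For K₀ ∈ L²(0,a), F(k) = ∫₀^a K₀(t) sin(kt) dt satisfies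
F(k) = o(e^{a|Im k|}) as |k| → ∞. -/
theorem stmt_4 (a : ℝ) (ha : 0 < a) (K₀ : ℝ → ℝ)
    (hK : MemLp K₀ 2 (volume.restrict (Set.Ioc 0 a))) :
    ∀ ε > 0, ∃ R : ℝ, ∀ k : ℂ, R ≤ ‖k‖ →
      ‖∫ t in (0:ℝ)..a, (K₀ t : ℂ) * Complex.sin (k * t)‖ ≤
        ε * Real.exp (a * |k.im|) := by
  intro ε hε
  have hK₁ : IntervalIntegrable K₀ volume 0 a :=
    (intervalIntegrable_iff_integrableOn_Ioc_of_le ha.le).2 (hK.integrable one_le_two)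
  exact hK₁.exists_norm_integral_ofReal_mul_sin_le ha.le hε
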